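/- arXiv:0711.1738 — 3 statements merged into one kernel-verified Lean document; each statement's English description precedes it below -/
import Mathlib

section
/- For every integer k ≥ 0, the function x ↦ a^F_k(x) from ℚ to ℚ is a polynomial function: there exists a (unique) polynomial P_k ∈ ℚ[x] with P_k(x) = a^F_k(x) for all x ∈ ℚ, and P_k has degree exactly k with leading coefficient 2^k/k!. -/
/-!
Substituting an indeterminate for `x` turns each `C(x - a, n)` into a polynomial of degree `n`
with leading coefficient `1/n!`. The `p`-th term of the first sum then has degree at most
`p + (k - p) = k` and `X^k`-coefficient `(-1)^p/p! · 3^(k-p)/(k-p)!`, while the terms of the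
second sum have degree at most `(p - 1) + (k - p) < k`. By the binomial theorem the
`X^k`-coefficient is `(-1 + 3)^k/k! = 2^k/k!`; uniqueness holds because `ℚ` is infinite.
-/

def ffall (x : ℚ) (n : ℕ) : ℚ := ∏ i ∈ Finset.range n, (x - (i : ℚ))

def gchoose (x : ℚ) (n : ℤ) : ℚ :=
  if 0 ≤ n then ffall x n.toNat / ((n.toNat).factorial : ℚ) else 0

def aF (k : ℕ) (x : ℚ) : ℚ :=
  (∑ p ∈ Finset.range (k + 1), (-1 : ℚ) ^ p * gchoose (x - 1 - p) p *
    ∑ r ∈ Finset.range (k - p + 1),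
      3 ^ r * gchoose (x - 1 - 2 * p) r * gchoose ((p : ℚ) + 1) ((k : ℤ) - p - r))
  + ∑ p ∈ Finset.Icc 1 k, (-1 : ℚ) ^ p * gchoose (x - 1 - p) ((p : ℤ) - 1) *
    ∑ r ∈ Finset.range (k - p + 1),
      3 ^ r * gchoose (x - 2 * p) r * gchoose ((p : ℚ) - 1) ((k : ℤ) - p - r)

open Polynomial Finset
open scoped Nat

lemma add_pow_div_factorial {K : Type*} [Field K] [CharZero K] (a b : K) (k : ℕ) :
    (a + b) ^ k / k ! = ∑ p ∈ range (k + 1), a ^ p / p ! * (b ^ (k - p) / (k - p) !) := by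
  rw [add_pow, sum_div]
  refine sum_congr rfl fun p hp => ?_
  have hpk := mem_range_succ_iff.mp hp
  have hchoose : (k.choose p : K) ≠ 0 := by exact_mod_cast (Nat.choose_pos hpk).ne'
  rw [← Nat.choose_mul_factorial_mul_factorial hpk]
  push_cast
  field_simp

section
variable {R : Type*} [Semiring R]

lemma natDegree_sum_range_le {f : ℕ → R[X]} (hf : ∀ r, (f r).natDegree ≤ r) (m : ℕ) :
    (∑ r ∈ range (m + 1), f r).natDegree ≤ m :=
  natDegree_sum_le_of_forall_le _ _ fun r hr => (hf r).trans (mem_range_succ_iff.mp hr)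

lemma coeff_sum_range_succ_self {f : ℕ → R[X]} (hf : ∀ r, (f r).natDegree ≤ r) (m : ℕ) :
    (∑ r ∈ range (m + 1), f r).coeff m = (f m).coeff m := by
  rw [finsetSum_coeff, sum_eq_single_of_mem m (self_mem_range_succ m)]
  intro r hr hne
  exact coeff_eq_zero_of_natDegree_lt ((hf r).trans_lt (by grind))

lemma natDegree_C_mul_mul_le (c : R) (f g : R[X]) :
    (C c * f * g).natDegree ≤ f.natDegree + g.natDegree :=
  natDegree_mul_le.trans (add_le_add_left (natDegree_C_mul_le c f) _)

end

lemma gchoose_zero (x : ℚ) : gchoose x 0 = 1 := by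
  simp [gchoose, ffall]

noncomputable def binomPoly (a : ℚ) (n : ℤ) : ℚ[X] :=
  if 0 ≤ n then C ((n.toNat ! : ℚ)⁻¹) * (descPochhammer ℚ n.toNat).comp (X - C a) else 0

lemma eval_binomPoly (a x : ℚ) (n : ℤ) : (binomPoly a n).eval x = gchoose (x - a) n := by
  unfold binomPoly gchoose ffall
  split_ifs
  · simp [eval_comp, descPochhammer_eval_eq_prod_range, div_eq_inv_mul]
  · simp

lemma natDegree_descPochhammer_comp_X_sub_C {R : Type*} [CommRing R] [IsDomain R] (a : R)
    (n : ℕ) : ((descPochhammer R n).comp (X - C a)).natDegree = n := by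
  rw [natDegree_comp, descPochhammer_natDegree, natDegree_X_sub_C, mul_one]

lemma natDegree_binomPoly_le (a : ℚ) (n : ℤ) : (binomPoly a n).natDegree ≤ n.toNat := by
  unfold binomPoly
  split_ifs
  · exact (natDegree_C_mul_le _ _).trans (natDegree_descPochhammer_comp_X_sub_C a _).le
  · simp

lemma coeff_binomPoly_self (a : ℚ) (n : ℕ) : (binomPoly a n).coeff n = (n ! : ℚ)⁻¹ := by
  have hmonic := (monic_descPochhammer ℚ n).comp_X_sub_C a
  rw [Monic, leadingCoeff, natDegree_descPochhammer_comp_X_sub_C] at hmonic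
  simp [binomPoly, coeff_C_mul, hmonic]

noncomputable def threePowSum (b : ℚ) (d : ℕ → ℚ) (m : ℕ) : ℚ[X] :=
  ∑ r ∈ range (m + 1), C (3 ^ r) * binomPoly b r * C (d r)

lemma natDegree_threePowSumTerm_le (b : ℚ) (d : ℕ → ℚ) (r : ℕ) :
    (C (3 ^ r) * binomPoly b r * C (d r)).natDegree ≤ r :=
  (natDegree_C_mul_mul_le _ _ _).trans (by simpa using natDegree_binomPoly_le b r)

lemma natDegree_threePowSum_le (b : ℚ) (d : ℕ → ℚ) (m : ℕ) :
    (threePowSum b d m).natDegree ≤ m :=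
  natDegree_sum_range_le (natDegree_threePowSumTerm_le b d) m

lemma coeff_threePowSum_self (b : ℚ) (d : ℕ → ℚ) (m : ℕ) :
    (threePowSum b d m).coeff m = 3 ^ m * (m ! : ℚ)⁻¹ * d m := by
  rw [threePowSum, coeff_sum_range_succ_self (natDegree_threePowSumTerm_le b d), coeff_mul_C,
    coeff_C_mul, coeff_binomPoly_self]

noncomputable def aFPoly (k : ℕ) : ℚ[X] :=
  (∑ p ∈ range (k + 1), C ((-1) ^ p) * binomPoly (1 + p) p *
    threePowSum (1 + 2 * p) (fun r => gchoose ((p : ℚ) + 1) ((k : ℤ) - p - r)) (k - p))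
  + ∑ p ∈ Icc 1 k, C ((-1) ^ p) * binomPoly (1 + p) ((p : ℤ) - 1) *
    threePowSum (2 * p) (fun r => gchoose ((p : ℚ) - 1) ((k : ℤ) - p - r)) (k - p)

lemma eval_aFPoly (k : ℕ) (x : ℚ) : (aFPoly k).eval x = aF k x := by
  simp only [aFPoly, threePowSum, aF, eval_add, eval_finsetSum, eval_mul, eval_C,
    eval_binomPoly, sub_sub]

lemma natDegree_binomPoly_mul_threePowSum_le (c a b : ℚ) (d : ℕ → ℚ) (n : ℤ) (m : ℕ) :
    (C c * binomPoly a n * threePowSum b d m).natDegree ≤ n.toNat + m :=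
  (natDegree_C_mul_mul_le _ _ _).trans
    (add_le_add (natDegree_binomPoly_le a n) (natDegree_threePowSum_le b d m))

lemma coeff_binomPoly_mul_threePowSum (c a b : ℚ) (d : ℕ → ℚ) (n m : ℕ) :
    (C c * binomPoly a n * threePowSum b d m).coeff (n + m)
      = c * ((n ! : ℚ)⁻¹ * (3 ^ m * (m ! : ℚ)⁻¹ * d m)) := by
  rw [mul_assoc, coeff_C_mul, coeff_mul_add_eq_of_natDegree_le
    (by simpa using natDegree_binomPoly_le a n) (natDegree_threePowSum_le b d m),
    coeff_binomPoly_self, coeff_threePowSum_self]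

lemma natDegree_aFPoly_le (k : ℕ) : (aFPoly k).natDegree ≤ k := by
  refine (natDegree_add_le _ _).trans (max_le ?_ ?_) <;>
    refine natDegree_sum_le_of_forall_le _ _ fun p hp => ?_
  · have := natDegree_binomPoly_mul_threePowSum_le ((-1) ^ p) (1 + p) (1 + 2 * p)
      (fun r => gchoose ((p : ℚ) + 1) ((k : ℤ) - p - r)) p (k - p)
    grind
  · have := natDegree_binomPoly_mul_threePowSum_le ((-1) ^ p) (1 + p) (2 * p)
      (fun r => gchoose ((p : ℚ) - 1) ((k : ℤ) - p - r)) ((p : ℤ) - 1) (k - p)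
    grind

lemma coeff_aFPoly_self (k : ℕ) : (aFPoly k).coeff k = 2 ^ k / k ! := by
  have hcorrection : ∀ p ∈ Icc 1 k, (C ((-1) ^ p) * binomPoly (1 + p) ((p : ℤ) - 1) *
      threePowSum (2 * p) (fun r => gchoose ((p : ℚ) - 1) ((k : ℤ) - p - r)) (k - p)).coeff k
        = 0 := fun p hp =>
    coeff_eq_zero_of_natDegree_lt <| (natDegree_binomPoly_mul_threePowSum_le _ _ _ _ _ _).trans_lt
      (by grind)
  rw [aFPoly, coeff_add, finsetSum_coeff, finsetSum_coeff, sum_eq_zero hcorrection, add_zero,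
    show (2 : ℚ) = -1 + 3 by norm_num, add_pow_div_factorial]
  refine sum_congr rfl fun p hp => ?_
  obtain ⟨q, rfl⟩ := Nat.exists_eq_add_of_le (mem_range_succ_iff.mp hp)
  rw [Nat.add_sub_cancel_left, coeff_binomPoly_mul_threePowSum]
  simp [gchoose_zero, div_eq_mul_inv, mul_assoc]

/-- For each `k ≥ 0`, `x ↦ a^F_k(x)` is a polynomial function: there is a unique
polynomial `P ∈ ℚ[x]` agreeing with it everywhere, and `P` has degree exactly `k`
with leading coefficient `2^k/k!`. -/
theorem aF_polynomial (k : ℕ) :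
    ∃ P : Polynomial ℚ,
      (∀ x : ℚ, P.eval x = aF k x) ∧
      (∀ Q : Polynomial ℚ, (∀ x : ℚ, Q.eval x = aF k x) → Q = P) ∧
      P.natDegree = k ∧
      P.leadingCoeff = 2 ^ k / (k.factorial : ℚ) := by
  have hdeg : (aFPoly k).natDegree = k :=
    natDegree_eq_of_le_of_coeff_ne_zero (natDegree_aFPoly_le k)
      (by rw [coeff_aFPoly_self]; positivity)
  refine ⟨aFPoly k, eval_aFPoly k, fun Q hQ => funext fun x => by rw [hQ, eval_aFPoly],
    hdeg, ?_⟩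
  rw [leadingCoeff, hdeg, coeff_aFPoly_self]
end

section
/- Let R be a commutative ring and q, v, v' ∈ R. For m ≥ 1 let t_F(m) = Σ over all compositions (ℓ₁,…,ℓ_k) of m into positive integer parts of ∏_{j=1}^{k} v^{ℓ_j−1}·(q+ℓ_j·v'), and define t_P(m) = Σ_{k=1}^{m−1} k·v^{k−1}·(q+k·v')·t_F(m−k) + v^{m−1}·(v+m)·(q+m·v'). Let Ψ(z) = Σ_{ℓ≥1} v^{ℓ−1}·(q+ℓ·v')·z^ℓ ∈ R[[z]] and let Ψ′ denote its formal derivative. Then, in R[[z]], (1 − Ψ(z)) · Σ_{m≥1} t_P(m)·z^m = z·Ψ′(z) + v·Ψ(z)·(1 − Ψ(z)). -/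
/-- Partition function of the one-dimensional `m`-site polymer gas (free
boundary conditions): each site covered by exactly one polymer, a polymer of
length `ℓ` having fugacity `v^(ℓ-1) (q + ℓ v')`. -/
noncomputable def tF {R : Type*} [CommRing R] (q v v' : R) (m : ℕ) : R :=
  ∑ c : Composition m, (c.blocks.map (fun (ℓ : ℕ) =>
    v ^ (ℓ - 1) * (q + (ℓ : R) * v'))).prod

/-- Partition function of the polymer gas on the `m`-cycle (cylindrical
boundary conditions):
`t_P(m) = ∑_{k=1}^{m-1} k v^(k-1) (q + k v') t_F(m-k) + v^(m-1) (v+m) (q + m v')`. -/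
noncomputable def tP {R : Type*} [CommRing R] (q v v' : R) (m : ℕ) : R :=
  (∑ k ∈ Finset.Icc 1 (m - 1), (k : R) * v ^ (k - 1) * (q + (k : R) * v') * tF q v v' (m - k))
    + v ^ (m - 1) * (v + (m : R)) * (q + (m : R) * v')

/-!
Splitting off the first polymer shows that `F(z) = ∑_{m ≥ 0} t_F(m) z^m`, with `t_F(0) = 1` from
the empty composition, satisfies `(1 - Ψ) F = 1`. Writing the single-polymer term of `t_P(m)` as
`v ψ(m) + m ψ(m)`, where `ψ(ℓ) = v^(ℓ-1) (q + ℓ v')`, turns the definition of `t_P` into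
`∑_{m ≥ 1} t_P(m) z^m = z Ψ' F + v Ψ`; multiplying by `1 - Ψ` gives the claim.
-/
open Finset PowerSeries

namespace Composition

variable {n : ℕ}

def tail (c : Composition n) : Composition (n - c.blocks.headI) where
  blocks := c.blocks.tail
  blocks_pos hi := c.blocks_pos (List.mem_of_mem_tail hi)
  blocks_sum := by
    have hsum := c.blocks_sum
    cases hb : c.blocks <;> simp_all
    omega

def cons {m : ℕ} (k : ℕ) (c : Composition m) (h : k + 1 + m = n) : Composition n where
  blocks := (k + 1) :: c.blocks
  blocks_pos hi := (List.mem_cons.1 hi).elim (fun h => h ▸ k.succ_pos) c.blocks_pos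
  blocks_sum := by simp [c.blocks_sum, ← h]

theorem headI_le (c : Composition n) : c.blocks.headI ≤ n := by
  cases hb : c.blocks with
  | nil => exact Nat.zero_le n
  | cons a l =>
    rw [← c.blocks_sum, hb]
    exact List.le_sum_of_mem List.mem_cons_self

theorem one_le_headI (c : Composition (n + 1)) : 1 ≤ c.blocks.headI := by
  have hsum := c.blocks_sum
  cases hb : c.blocks with
  | nil => simp_all
  | cons a l => exact c.blocks_pos (by simp [hb])

theorem headI_cons_tail (c : Composition (n + 1)) :
    c.blocks.headI :: c.tail.blocks = c.blocks := by
  show c.blocks.headI :: c.blocks.tail = c.blocks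
  have hsum := c.blocks_sum
  cases hb : c.blocks with
  | nil => simp_all
  | cons a l => rfl

theorem sigma_ext_blocks {ι : Type*} {f : ι → ℕ} {x y : Σ i, Composition (f i)}
    (h : x.1 = y.1) (hb : x.2.blocks = y.2.blocks) : x = y := by
  obtain ⟨i, c⟩ := x
  obtain ⟨j, d⟩ := y
  dsimp only at h hb
  subst h
  rw [Composition.ext hb]

def consEquiv (n : ℕ) : (Σ p : antidiagonal n, Composition p.1.2) ≃ Composition (n + 1) where
  toFun x := cons x.1.1.1 x.2 (by have := mem_antidiagonal.1 x.1.2; omega)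
  invFun c := ⟨⟨(c.blocks.headI - 1, n + 1 - c.blocks.headI), by
    rw [HasAntidiagonal.mem_antidiagonal]
    have := c.one_le_headI
    have := c.headI_le
    dsimp only
    omega⟩, c.tail⟩
  left_inv := by
    rintro ⟨⟨⟨k, j⟩, h⟩, c⟩
    rw [HasAntidiagonal.mem_antidiagonal] at h
    refine sigma_ext_blocks ?_ rfl
    ext
    simp [cons]
  right_inv c := by
    ext1
    simp only [cons]
    rw [Nat.sub_add_cancel c.one_le_headI, c.headI_cons_tail]

theorem sum_prod_blocks_zero {R : Type*} [Semiring R] (f : ℕ → R) :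
    ∑ c : Composition 0, (c.blocks.map f).prod = 1 := by
  have : Subsingleton (Composition 0) := ⟨fun c d => by
    rw [eq_ones_iff_le_length.2 c.length.zero_le, eq_ones_iff_le_length.2 d.length.zero_le]⟩
  simp [Fintype.sum_subsingleton _ (ones 0)]

theorem sum_prod_blocks_succ {R : Type*} [Semiring R] (f : ℕ → R) (n : ℕ) :
    ∑ c : Composition (n + 1), (c.blocks.map f).prod =
      ∑ p ∈ antidiagonal n, f (p.1 + 1) * ∑ c : Composition p.2, (c.blocks.map f).prod := by
  rw [← (consEquiv n).sum_comp, Fintype.sum_sigma, ← sum_coe_sort (antidiagonal n)]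
  simp [consEquiv, cons, mul_sum]

end Composition

theorem PowerSeries.one_sub_mul_mk_sum_prod_blocks {R : Type*} [Ring R] (f : ℕ → R) :
    (1 - PowerSeries.mk fun n => if n = 0 then 0 else f n) *
      PowerSeries.mk (fun n => ∑ c : Composition n, (c.blocks.map f).prod) = 1 := by
  ext n
  cases n with
  | zero => simp [Composition.sum_prod_blocks_zero]
  | succ n =>
    rw [sub_mul, one_mul, map_sub, coeff_mul, Nat.sum_antidiagonal_succ]
    simp [Composition.sum_prod_blocks_succ]

section Polymer

variable {R : Type*} [CommRing R] (q v v' : R)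

def polymerSeries : R⟦X⟧ :=
  PowerSeries.mk fun ℓ => if ℓ = 0 then 0 else v ^ (ℓ - 1) * (q + (ℓ : R) * v')

theorem tF_zero : tF q v v' 0 = 1 := Composition.sum_prod_blocks_zero _

theorem one_sub_polymerSeries_mul_mk_tF :
    (1 - polymerSeries q v v') * PowerSeries.mk (tF q v v') = 1 :=
  one_sub_mul_mk_sum_prod_blocks _

theorem tP_succ (n : ℕ) :
    tP q v v' (n + 1) = ∑ p ∈ antidiagonal n,
      (p.1 + 1 : R) * v ^ p.1 * (q + (p.1 + 1 : R) * v') * tF q v v' p.2 +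
        v * (v ^ n * (q + (n + 1 : R) * v')) := by
  rw [tP, Nat.sum_antidiagonal_eq_sum_range_succ
      (fun i j => (i + 1 : R) * v ^ i * (q + (i + 1 : R) * v') * tF q v v' j),
    sum_range_succ, ← Ico_add_one_right_eq_Icc, sum_Ico_eq_sum_range]
  simp only [add_tsub_cancel_right, add_comm 1, Nat.cast_add, Nat.cast_one, Nat.reduceSubDiff,
    tsub_self, tF_zero, mul_one]
  ring

theorem mk_tP_eq : PowerSeries.mk (fun m => if m = 0 then 0 else tP q v v' m) =
    X * d⁄dX R (polymerSeries q v v') * PowerSeries.mk (tF q v v') +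
      C v * polymerSeries q v v' := by
  ext n
  cases n with
  | zero => simp [polymerSeries]
  | succ n =>
    rw [mul_assoc, map_add, coeff_succ_X_mul, coeff_mul, coeff_C_mul]
    simp only [coeff_mk, Nat.add_eq_zero_iff, one_ne_zero, and_false, ↓reduceIte, tP_succ,
      polymerSeries, coeff_derivative, add_tsub_cancel_right, Nat.cast_add, Nat.cast_one,
      add_left_inj]
    exact sum_congr rfl fun _ _ => by ring

end Polymer

/-- With `Ψ(z) = ∑_{ℓ ≥ 1} v^(ℓ-1) (q + ℓ v') z^ℓ` and `Ψ'` its formal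
derivative, the generating function `Φ_P(z) = ∑_{m ≥ 1} t_P(m) z^m` satisfies
`(1 - Ψ) Φ_P = z Ψ' + v Ψ (1 - Ψ)` in `R⟦z⟧`. -/
theorem tP_generating_function {R : Type*} [CommRing R] (q v v' : R) :
    (1 - PowerSeries.mk (fun (ℓ : ℕ) => if ℓ = 0 then 0 else v ^ (ℓ - 1) * (q + (ℓ : R) * v')))
      * PowerSeries.mk (fun m => if m = 0 then 0 else tP q v v' m)
    = PowerSeries.X * PowerSeries.derivativeFun
        (PowerSeries.mk (fun (ℓ : ℕ) => if ℓ = 0 then 0 else v ^ (ℓ - 1) * (q + (ℓ : R) * v')))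
      + PowerSeries.C v
        * PowerSeries.mk (fun (ℓ : ℕ) => if ℓ = 0 then 0 else v ^ (ℓ - 1) * (q + (ℓ : R) * v'))
        * (1 - PowerSeries.mk (fun (ℓ : ℕ) => if ℓ = 0 then 0 else v ^ (ℓ - 1) * (q + (ℓ : R) * v'))) := by
  change (1 - polymerSeries q v v') * _ =
    X * d⁄dX R (polymerSeries q v v') + C v * polymerSeries q v v' * (1 - polymerSeries q v v')
  rw [mk_tP_eq]
  linear_combination X * d⁄dX R (polymerSeries q v v') * one_sub_polymerSeries_mul_mk_tF q v v'
end

section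
/- For each integer s ≥ 1 there exists a polynomial p_s ∈ ℚ[x] of degree s such that ã^P_k(k−s) = p_s(k) for every integer k ≥ s (here ã^P_k(k−s) denotes the defining formula for ã^P_k evaluated at x = k−s). The coefficient of x^s in p_s equals (−1)^{s+1}/s!, and the coefficient of x^{s−1} equals (−1)^s·(s+1)/(2·(s−1)!). Moreover p_s(s) = 0 (equivalently ã^P_s(0) = 0), so that x − s divides p_s. -/
/-- The function `ã^P_k(x)`. -/
def aP (k : ℕ) (x : ℚ) : ℚ :=
  3 ^ k * gchoose x k
  + ∑ p ∈ Finset.Icc 1 k, (-1 : ℚ) ^ p * (x / p) * gchoose (x - p - 1) ((p : ℤ) - 1) *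
    ∑ r ∈ Finset.range (k - p + 1),
      3 ^ r * gchoose (x - 2 * p) r * gchoose (p : ℚ) ((k : ℤ) - p - r)

/-!
Fix `k > s` and put `x = k - s`. The summand `p < k - s` of `ã^P_k(x)` vanishes, because one of
`C(x-p-1, p-1)`, `C(x-2p, r)`, `C(p, k-p-r)` has natural entries with the lower one larger.
For `p = k - j` with `0 ≤ j ≤ s`, upper negation turns `(-1)^p (x/p) C(x-p-1, p-1)` into
`-(k-s) C(k+s-2j-1, s-j-1)/(s-j)` (into `-1` when `j = s`), and the two other coefficients are
falling factorials in `k` of degrees `r` and `j - r`. Hence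
`ã^P_k(k-s) = -(1/s!) ∑_{j ≤ s} ∑_{r ≤ j} C(s,j) C(j,r) (-3)^r M_{j,r}(k)`
with explicit monic polynomials `M_{j,r}` of degree `s`, all vanishing at `s`. The binomial
theorem, applied first in `r` and then in `j`, gives the leading coefficient; the next one
comes out the same way, since the sum of the roots of `M_{j,r}` is affine in `r` and the
resulting weight is affine in `j`.
-/

open Polynomial Finset

lemma gchoose_natCast (x : ℚ) (n : ℕ) : gchoose x n = ffall x n / n.factorial := by
  simp [gchoose]

lemma gchoose_natCast_natCast (m n : ℕ) : gchoose m n = m.choose n := by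
  rw [gchoose_natCast, Nat.cast_choose_eq_descPochhammer_div, ffall,
    descPochhammer_eval_eq_prod_range]

lemma gchoose_eq_zero_of_lt {y : ℚ} {n : ℤ} (m : ℕ) (hy : y = m) (hn : (m : ℤ) < n) :
    gchoose y n = 0 := by
  lift n to ℕ using by omega
  rw [hy, gchoose_natCast_natCast, Nat.choose_eq_zero_of_lt (by omega), Nat.cast_zero]

lemma ffall_natCast (m n : ℕ) : ffall m n = m.choose n * n.factorial := by
  rw [← gchoose_natCast_natCast, gchoose_natCast, div_mul_cancel₀ _ (by positivity)]

lemma ffall_neg_sub_one (y : ℚ) (n : ℕ) : ffall (-y - 1) n = (-1) ^ n * ffall (y + n) n := by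
  rw [ffall, ffall, ← prod_range_reflect, ← card_range n, ← prod_const, card_range,
    ← prod_mul_distrib]
  refine prod_congr rfl fun i hi => ?_
  rw [Nat.sub_sub, Nat.cast_sub (by simp at hi; omega)]
  push_cast
  ring

lemma ffall_sub_eq_eval_prod (y c : ℚ) (n : ℕ) :
    ffall (y - c) n = (∏ i ∈ range n, (X - C (c + i))).eval y := by
  rw [ffall, eval_prod]
  exact prod_congr rfl fun i _ => by simp; ring

lemma ffall_const_sub_eq_eval_prod (y c : ℚ) (n : ℕ) :
    ffall (c - y) n = (-1) ^ n * (∏ i ∈ range n, (X - C (c - i))).eval y := by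
  rw [ffall, eval_prod, ← card_range n, ← prod_const, card_range, ← prod_mul_distrib]
  exact prod_congr rfl fun i _ => by simp; ring

lemma choose_mul_succ_eq_choose_mul_succ (a p : ℕ) :
    (a + p + 1).choose p * (a + 1) = (a + p + 1).choose a * (p + 1) := by
  rw [Nat.choose_symm_of_eq_add (by ring : a + p + 1 = p + (a + 1)), Nat.choose_succ_right_eq]
  congr 2
  omega

lemma neg_one_pow_mul_div_mul_gchoose_neg_sub_one (a p : ℕ) (hp : 0 < p) :
    (-1) ^ p * (((p : ℚ) - a) / p) * gchoose (-(a : ℚ) - 1) ((p : ℤ) - 1) =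
      -(if 0 < a then (p : ℚ) - a else 1) * ffall ((p : ℚ) + a - 1) (a - 1) / a.factorial := by
  obtain _ | p := p
  · omega
  have hsign : (-1 : ℚ) ^ (p + 1) * (-1) ^ p = -1 := by
    rw [← pow_add]; exact Odd.neg_one_pow ⟨p, by ring⟩
  have hupper : gchoose (-(a : ℚ) - 1) ((p + 1 : ℕ) - 1 : ℤ) =
      (-1) ^ p * ffall (a + p : ℕ) p / p.factorial := by
    rw [show ((p + 1 : ℕ) - 1 : ℤ) = (p : ℕ) by push_cast; ring, gchoose_natCast,
      ffall_neg_sub_one, Nat.cast_add, mul_div_assoc]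
  rw [hupper, ffall_natCast, mul_div_assoc, mul_div_assoc, ← mul_assoc,
    mul_right_comm _ _ ((-1) ^ p), hsign]
  obtain _ | a := a
  · simp [ffall]
    field_simp
  · have key : ((a + p + 1).choose p : ℚ) * (a + 1) = (a + p + 1).choose a * (p + 1) := by
      exact_mod_cast choose_mul_succ_eq_choose_mul_succ a p
    rw [if_pos a.succ_pos, show (a + 1 - 1) = a from rfl,
      show ((p + 1 : ℕ) : ℚ) + (a + 1 : ℕ) - 1 = (a + p + 1 : ℕ) by push_cast; ring,
      show a + 1 + p = a + p + 1 by ring, ffall_natCast, Nat.factorial_succ]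
    push_cast
    field_simp
    linear_combination ((a : ℚ) - p) * key

lemma sum_range_natCast (n : ℕ) : ∑ i ∈ range n, (i : ℚ) = n * (n - 1) / 2 := by
  induction n with
  | zero => simp
  | succ n ih => rw [sum_range_succ, ih]; push_cast; ring

lemma sum_range_choose_mul_pow {R : Type*} [CommSemiring R] (a : R) (n : ℕ) :
    ∑ r ∈ range (n + 1), n.choose r * a ^ r = (a + 1) ^ n := by
  rw [add_pow]
  exact sum_congr rfl fun r _ => by rw [one_pow]; ring

lemma sum_range_choose_mul_pow_mul_self {R : Type*} [CommSemiring R] (a : R) (n : ℕ) :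
    (∑ r ∈ range (n + 1), n.choose r * a ^ r * r) * (a + 1) = n * a * (a + 1) ^ n := by
  obtain _ | n := n
  · simp
  have hterm (r : ℕ) : ((n + 1).choose (r + 1) : R) * a ^ (r + 1) * ↑(r + 1) =
      (n + 1) * a * (n.choose r * a ^ r) := by
    calc _ = (((n + 1).choose (r + 1) * (r + 1) : ℕ) : R) * a ^ (r + 1) := by push_cast; ring
      _ = _ := by rw [← Nat.add_one_mul_choose_eq]; push_cast; ring
  rw [sum_range_succ', Nat.cast_zero, mul_zero, add_zero, sum_congr rfl fun r _ => hterm r,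
    ← mul_sum, sum_range_choose_mul_pow]
  push_cast
  ring

lemma sum_range_choose_mul_pow_mul_add {K : Type*} [Field K] (a u v : K) (n : ℕ)
    (ha : a + 1 ≠ 0) :
    ∑ r ∈ range (n + 1), n.choose r * a ^ r * (u + v * r) =
      (a + 1) ^ n * (u + v * n * a / (a + 1)) := by
  calc _ = (∑ r ∈ range (n + 1), n.choose r * a ^ r) * u
        + v * ∑ r ∈ range (n + 1), n.choose r * a ^ r * r := by
        rw [sum_mul, mul_sum, ← sum_add_distrib]
        exact sum_congr rfl fun r _ => by ring
    _ = _ := by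
      rw [sum_range_choose_mul_pow, eq_div_of_mul_eq ha (sum_range_choose_mul_pow_mul_self a n)]
      field_simp

/-- `M_{j,r}`: for `k > s`, `p = k - j` and `x = k - s`, the summand `(p, r)` of `aP k x` is
`-C(s,j) C(j,r) (-3)^r / s!` times the value of this polynomial at `k`. The first factor
stands for `x`, which the factor `x / p` leaves over unless `j = s`, where `x / p = 1`. -/
noncomputable def termPoly (s j r : ℕ) : ℚ[X] :=
  (if j < s then X - C (s : ℚ) else 1) *
    (∏ i ∈ range (s - j - 1), (X - C (2 * j + 1 - s + i : ℚ))) *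
    (∏ i ∈ range r, (X - C (2 * j - s - i : ℚ))) *
    ∏ i ∈ range (j - r), (X - C (j + i : ℚ))

lemma monic_ite_X_sub_C (P : Prop) [Decidable P] (c : ℚ) :
    (if P then X - C c else 1 : ℚ[X]).Monic := by
  split_ifs
  exacts [monic_X_sub_C c, monic_one]

lemma termPoly_monic (s j r : ℕ) : (termPoly s j r).Monic :=
  (((monic_ite_X_sub_C _ _).mul (monic_prod_X_sub_C _ _)).mul (monic_prod_X_sub_C _ _)).mul
    (monic_prod_X_sub_C _ _)

lemma termPoly_natDegree {s j r : ℕ} (hr : r ≤ j) (hj : j ≤ s) :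
    (termPoly s j r).natDegree = s := by
  have m := monic_ite_X_sub_C (j < s) (s : ℚ)
  rw [termPoly, Monic.natDegree_mul ((m.mul (monic_prod_X_sub_C _ _)).mul (monic_prod_X_sub_C _ _))
    (monic_prod_X_sub_C _ _), Monic.natDegree_mul (m.mul (monic_prod_X_sub_C _ _))
    (monic_prod_X_sub_C _ _), Monic.natDegree_mul m (monic_prod_X_sub_C _ _)]
  split_ifs <;>
    simp only [natDegree_finsetProd_X_sub_C_eq_card, card_range, natDegree_X_sub_C,
      natDegree_one] <;> omega

lemma termPoly_nextCoeff {s j r : ℕ} (hr : r ≤ j) (hj : j ≤ s) :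
    (termPoly s j r).nextCoeff = -(s + (s - 1) * (4 * j - s - 2 * r) / 2 : ℚ) := by
  have m := monic_ite_X_sub_C (j < s) (s : ℚ)
  rw [termPoly, Monic.nextCoeff_mul ((m.mul (monic_prod_X_sub_C _ _)).mul (monic_prod_X_sub_C _ _))
    (monic_prod_X_sub_C _ _), Monic.nextCoeff_mul (m.mul (monic_prod_X_sub_C _ _))
    (monic_prod_X_sub_C _ _), Monic.nextCoeff_mul m (monic_prod_X_sub_C _ _)]
  simp only [prod_X_sub_C_nextCoeff, sum_add_distrib, sum_sub_distrib, sum_const, card_range,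
    nsmul_eq_mul, sum_range_natCast]
  rw [Nat.cast_sub hr]
  split_ifs with hjs
  · rw [nextCoeff_X_sub_C, Nat.sub_sub, Nat.cast_sub (by omega)]
    push_cast
    ring
  · obtain rfl : j = s := by omega
    rw [← C_1, nextCoeff_C_eq_zero, Nat.sub_self, zero_tsub, Nat.cast_zero]
    ring

lemma termPoly_coeff_self {s j r : ℕ} (hr : r ≤ j) (hj : j ≤ s) :
    (termPoly s j r).coeff s = 1 := by
  simpa [termPoly_natDegree hr hj] using (termPoly_monic s j r).coeff_natDegree

lemma termPoly_coeff_pred {s j r : ℕ} (hr : r ≤ j) (hj : j ≤ s) (hs : 1 ≤ s) :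
    (termPoly s j r).coeff (s - 1) = -(s + (s - 1) * (4 * j - s - 2 * r) / 2 : ℚ) := by
  rw [← termPoly_nextCoeff hr hj, nextCoeff_of_natDegree_pos, termPoly_natDegree hr hj]
  rwa [termPoly_natDegree hr hj]

lemma termPoly_eval_self {s j : ℕ} (r : ℕ) (hj : j ≤ s) (hs : 1 ≤ s) :
    (termPoly s j r).eval (s : ℚ) = 0 := by
  simp only [termPoly, eval_mul, eval_prod, eval_sub, eval_X, eval_C]
  split_ifs with hjs
  · simp
  obtain rfl : j = s := by omega
  rcases Nat.eq_zero_or_pos r with rfl | hr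
  · rw [prod_eq_zero (mem_range.2 (by omega : 0 < j - 0)) (by simp), mul_zero]
  · rw [prod_eq_zero (mem_range.2 hr) (by simp; ring), mul_zero, zero_mul]

noncomputable def shiftedPoly (s : ℕ) : ℚ[X] :=
  C (-1 / s.factorial : ℚ) * ∑ j ∈ range (s + 1), ∑ r ∈ range (j + 1),
    C (s.choose j * j.choose r * (-3) ^ r : ℚ) * termPoly s j r

lemma shiftedPoly_coeff (s n : ℕ) :
    (shiftedPoly s).coeff n = -1 / s.factorial * ∑ j ∈ range (s + 1), s.choose j *
      ∑ r ∈ range (j + 1), j.choose r * (-3) ^ r * (termPoly s j r).coeff n := by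
  simp only [shiftedPoly, coeff_C_mul, finsetSum_coeff, mul_sum, mul_assoc]

lemma shiftedPoly_coeff_self (s : ℕ) :
    (shiftedPoly s).coeff s = (-1) ^ (s + 1) / s.factorial := by
  rw [shiftedPoly_coeff]
  calc _ = -1 / s.factorial * ∑ j ∈ range (s + 1), s.choose j *
        ∑ r ∈ range (j + 1), j.choose r * (-3 : ℚ) ^ r := by
        refine congrArg _ (sum_congr rfl fun j hj => congrArg _ (sum_congr rfl fun r hr => ?_))
        rw [termPoly_coeff_self (by simp at hr; omega) (by simp at hj; omega), mul_one]
    _ = _ := by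
      simp_rw [sum_range_choose_mul_pow]
      norm_num
      ring

lemma shiftedPoly_coeff_pred {s : ℕ} (hs : 1 ≤ s) :
    (shiftedPoly s).coeff (s - 1) = (-1) ^ s * (s + 1) / (2 * (s - 1).factorial) := by
  rw [shiftedPoly_coeff]
  calc _ = -1 / s.factorial * ∑ j ∈ range (s + 1), s.choose j * (-2 : ℚ) ^ j *
        ((-s + s * (s - 1) / 2) + (-(s - 1) / 2) * j) := by
        refine congrArg _ (sum_congr rfl fun j hj => ?_)
        have hj : j ≤ s := by simp at hj; omega
        calc _ = s.choose j * ∑ r ∈ range (j + 1), j.choose r * (-3 : ℚ) ^ r *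
              (-(s + (s - 1) * (4 * j - s) / 2) + (s - 1) * r) := by
              refine congrArg _ (sum_congr rfl fun r hr => ?_)
              rw [termPoly_coeff_pred (by simp at hr; omega) hj hs]
              ring
          _ = _ := by
              rw [sum_range_choose_mul_pow_mul_add _ _ _ _ (by norm_num)]
              ring
    _ = _ := by
      rw [sum_range_choose_mul_pow_mul_add _ _ _ _ (by norm_num)]
      obtain _ | s := s
      · omega
      rw [Nat.factorial_succ]
      push_cast
      field_simp
      ring

lemma shiftedPoly_natDegree (s : ℕ) : (shiftedPoly s).natDegree = s := by
  refine natDegree_eq_of_le_of_coeff_ne_zero ?_ (by rw [shiftedPoly_coeff_self]; positivity)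
  refine (natDegree_C_mul_le _ _).trans (natDegree_sum_le_of_forall_le _ _ fun j hj => ?_)
  refine natDegree_sum_le_of_forall_le _ _ fun r hr => (natDegree_C_mul_le _ _).trans ?_
  rw [termPoly_natDegree (by simp at hr; omega) (by simp at hj; omega)]

lemma shiftedPoly_eval_self {s : ℕ} (hs : 1 ≤ s) : (shiftedPoly s).eval (s : ℚ) = 0 := by
  simp only [shiftedPoly, eval_mul, eval_C, eval_finsetSum]
  rw [sum_eq_zero fun j hj => sum_eq_zero fun r _ => by
    rw [termPoly_eval_self r (by simp at hj; omega) hs, mul_zero], mul_zero]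

lemma X_sub_C_dvd_shiftedPoly {s : ℕ} (hs : 1 ≤ s) : X - C (s : ℚ) ∣ shiftedPoly s :=
  dvd_iff_isRoot.2 (shiftedPoly_eval_self hs)

def aPTerm (k : ℕ) (x : ℚ) (p : ℕ) : ℚ :=
  (-1 : ℚ) ^ p * (x / p) * gchoose (x - p - 1) ((p : ℤ) - 1) *
    ∑ r ∈ range (k - p + 1),
      3 ^ r * gchoose (x - 2 * p) r * gchoose (p : ℚ) ((k : ℤ) - p - r)

lemma aP_eq_add_sum_aPTerm (k : ℕ) (x : ℚ) :
    aP k x = 3 ^ k * gchoose x k + ∑ p ∈ Icc 1 k, aPTerm k x p := rfl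

lemma aPTerm_sub_eq_zero {s k p : ℕ} (hs : 1 ≤ s) (hp : s + p < k) :
    aPTerm k ((k : ℚ) - s) p = 0 := by
  rcases Nat.eq_zero_or_pos p with rfl | hp0
  · simp [aPTerm]
  by_cases hsmall : k - s < 2 * p
  · rw [aPTerm, gchoose_eq_zero_of_lt (k - (s + p + 1))
      (by push_cast [Nat.cast_sub (by omega : s + p + 1 ≤ k)]; ring) (by omega),
      mul_zero, zero_mul]
  refine mul_eq_zero_of_right _ (sum_eq_zero fun r _ => ?_)
  by_cases hr : r ≤ k - s - 2 * p
  · rw [gchoose_eq_zero_of_lt p rfl (by omega), mul_zero]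
  · rw [gchoose_eq_zero_of_lt (k - (s + 2 * p))
      (by push_cast [Nat.cast_sub (by omega : s + 2 * p ≤ k)]; ring) (by omega),
      mul_zero, zero_mul]

lemma aP_sub_eq_sum_aPTerm {s k : ℕ} (hs : 1 ≤ s) (hk : s < k) :
    aP k ((k : ℚ) - s) = ∑ j ∈ range (s + 1), aPTerm k ((k : ℚ) - s) (k - j) := by
  rw [aP_eq_add_sum_aPTerm, gchoose_eq_zero_of_lt (k - s)
    (by push_cast [Nat.cast_sub hk.le]; ring) (by omega), mul_zero, zero_add]
  calc _ = ∑ p ∈ range (k + 1), aPTerm k ((k : ℚ) - s) p := by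
        refine sum_subset (fun p hp => by simp at hp ⊢; omega) fun p hp hp' => ?_
        exact aPTerm_sub_eq_zero hs (by simp at hp hp'; omega)
    _ = ∑ j ∈ range (k + 1), aPTerm k ((k : ℚ) - s) (k - j) :=
        (sum_range_reflect _ _).symm
    _ = _ := by
        refine (sum_subset (fun j hj => by simp at hj ⊢; omega) fun j hj hj' => ?_).symm
        exact aPTerm_sub_eq_zero hs (by simp at hj hj'; omega)

lemma aPTerm_sub_eq {s j k : ℕ} (hj : j ≤ s) (hk : s < k) :
    aPTerm k ((k : ℚ) - s) (k - j) = ∑ r ∈ range (j + 1),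
      -1 / s.factorial *
        (s.choose j * j.choose r * (-3) ^ r * (termPoly s j r).eval (k : ℚ)) := by
  have hp : ((k - j : ℕ) : ℚ) = k - j := Nat.cast_sub (by omega)
  have houter : (-1) ^ (k - j) * (((k : ℚ) - s) / (k - j : ℕ)) *
      gchoose ((k : ℚ) - s - (k - j : ℕ) - 1) ((k - j : ℕ) - 1 : ℤ) =
      -((if j < s then X - C (s : ℚ) else 1) *
        ∏ i ∈ range (s - j - 1), (X - C (2 * j + 1 - s + i : ℚ))).eval (k : ℚ) /
        (s - j).factorial := by
    have ha : ((s - j : ℕ) : ℚ) = s - j := Nat.cast_sub hj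
    rw [show (k : ℚ) - s = (k - j : ℕ) - (s - j : ℕ) by rw [hp, ha]; ring,
      show ((k - j : ℕ) - (s - j : ℕ) : ℚ) - (k - j : ℕ) - 1 = -((s - j : ℕ) : ℚ) - 1 by ring,
      neg_one_pow_mul_div_mul_gchoose_neg_sub_one _ _ (by omega),
      show ((k - j : ℕ) : ℚ) + (s - j : ℕ) - 1 = k - (2 * j + 1 - s) by rw [hp, ha]; ring,
      ffall_sub_eq_eval_prod, eval_mul]
    split_ifs <;>
      first | omega | simp only [hp, ha, eval_sub, eval_X, eval_C, eval_one]; ring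
  have hinner (r : ℕ) (hr : r ≤ j) : 3 ^ r * gchoose ((k : ℚ) - s - 2 * (k - j : ℕ)) r *
      gchoose ((k - j : ℕ) : ℚ) ((k : ℤ) - (k - j : ℕ) - r) =
      (-3) ^ r / (r.factorial * (j - r).factorial) *
        ((∏ i ∈ range r, (X - C (2 * j - s - i : ℚ))).eval (k : ℚ) *
          (∏ i ∈ range (j - r), (X - C (j + i : ℚ))).eval (k : ℚ)) := by
    rw [show (k : ℤ) - (k - j : ℕ) - r = (j - r : ℕ) by omega, gchoose_natCast, gchoose_natCast,
      show (k : ℚ) - s - 2 * (k - j : ℕ) = (2 * j - s) - k by rw [hp]; ring,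
      ffall_const_sub_eq_eval_prod, hp, ffall_sub_eq_eval_prod,
      show (-3 : ℚ) ^ r = (-1) ^ r * 3 ^ r by rw [← mul_pow]; norm_num]
    ring
  rw [aPTerm, houter, show k - (k - j) + 1 = j + 1 by omega, mul_sum]
  refine sum_congr rfl fun r hr => ?_
  have hr : r ≤ j := by simp at hr; omega
  rw [hinner r hr, Nat.cast_choose ℚ hj, Nat.cast_choose ℚ hr]
  simp only [termPoly, eval_mul]
  field_simp

lemma shiftedPoly_eval {s k : ℕ} (hs : 1 ≤ s) (hk : s < k) :
    (shiftedPoly s).eval (k : ℚ) = aP k ((k : ℚ) - s) := by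
  simp only [shiftedPoly, eval_mul, eval_C, eval_finsetSum, mul_sum]
  rw [aP_sub_eq_sum_aPTerm hs hk]
  exact sum_congr rfl fun j hj => (aPTerm_sub_eq (by simp at hj; omega) hk).symm

lemma aP_zero_right {s : ℕ} (hs : 1 ≤ s) : aP s 0 = 0 := by
  rw [aP_eq_add_sum_aPTerm, gchoose_eq_zero_of_lt 0 (by simp) (by omega)]
  simp [aPTerm]

/-- For each `s ≥ 1` there is a polynomial `p_s ∈ ℚ[x]` of degree `s` with
`ã^P_k(k-s) = p_s(k)` for all integers `k ≥ s`; the coefficient of `x^s` is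
`(-1)^(s+1)/s!`, the coefficient of `x^(s-1)` is `(-1)^s (s+1)/(2 (s-1)!)`, and
`p_s(s) = 0` (equivalently `ã^P_s(0) = 0`), so `x - s` divides `p_s`. -/
theorem aP_shifted_polynomial (s : ℕ) (hs : 1 ≤ s) :
    ∃ p : Polynomial ℚ,
      p.natDegree = s ∧
      (∀ k : ℕ, s ≤ k → p.eval (k : ℚ) = aP k ((k : ℚ) - s)) ∧
      p.coeff s = (-1 : ℚ) ^ (s + 1) / (s.factorial : ℚ) ∧
      p.coeff (s - 1) = (-1 : ℚ) ^ s * ((s : ℚ) + 1) / (2 * ((s - 1).factorial : ℚ)) ∧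
      p.eval (s : ℚ) = 0 ∧ aP s 0 = 0 ∧
      (Polynomial.X - Polynomial.C (s : ℚ)) ∣ p := by
  refine ⟨shiftedPoly s, shiftedPoly_natDegree s, fun k hk => ?_, shiftedPoly_coeff_self s,
    shiftedPoly_coeff_pred hs, shiftedPoly_eval_self hs, aP_zero_right hs,
    X_sub_C_dvd_shiftedPoly hs⟩
  rcases hk.eq_or_lt with rfl | hk
  · rw [shiftedPoly_eval_self hs, sub_self, aP_zero_right hs]
  · exact shiftedPoly_eval hs hk
end
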